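/- Let (X,d) be a length space, x₀ ∈ X, r > 0, M_r ≥ 0, M > M_r, and define g_r(t) = M_r·t + M·max{t−r, 0} and v(x) = c + g_r(d(x₀,x)) for a constant c. Then for every x with 0 < d(x,x₀) < 2r and x ≠ x₀, the sub-slope satisfies |∇⁻v|(x) ≥ M_r if d(x,x₀) ≤ r, and |∇⁻v|(x) ≥ M if r < d(x,x₀) < 2r. -/
import Mathlib


open Filter Topology Set

/-- Sub-slope `|∇⁻v|(x) = limsup_{y→x} max{v(x)−v(y),0}/d(x,y)`. -/
noncomputable def subSlope {X : Type*} [MetricSpace X] (v : X → ℝ) (x : X) : ℝ :=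
  Filter.limsup (fun y => max (v x - v y) 0 / dist x y) (𝓝[≠] x)

lemma subslope_ge_aux {X : Type*} [MetricSpace X]
    (hlen : ∀ x y : X, ∀ ε > (0 : ℝ), ∃ ξ : ℝ → X, LipschitzWith 1 ξ ∧ ξ 0 = x ∧
      ∃ T : ℝ, 0 ≤ T ∧ T ≤ dist x y + ε ∧ ξ T = y)
    (x₀ x : X) (v : X → ℝ) (K C s₀ : ℝ) (hK : 0 ≤ K) (hC : 0 ≤ C)
    (hx : 0 < dist x x₀) (hs₀ : 0 < s₀)
    (hub : ∀ y : X, v x - v y ≤ C * dist x y)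
    (hlow : ∀ y : X, dist x x₀ - s₀ ≤ dist x₀ y → dist x₀ y ≤ dist x x₀ →
      K * (dist x x₀ - dist x₀ y) ≤ v x - v y) :
    K ≤ subSlope v x := by
  have hbdd : IsBoundedUnder (· ≤ ·) (𝓝[≠] x) (fun y => max (v x - v y) 0 / dist x y) := by
    refine isBoundedUnder_of_eventually_le (a := C) ?_
    filter_upwards [self_mem_nhdsWithin] with y hy
    have hd : 0 < dist x y := dist_pos.2 fun h => hy (h ▸ rfl)
    rw [div_le_iff₀ hd]
    exact max_le (hub y) (by positivity)
  refine le_of_forall_sub_le fun δ hδ => ?_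
  refine Filter.le_limsup_of_frequently_le ?_ hbdd
  rw [Filter.frequently_iff]
  intro U hU
  rw [Metric.mem_nhdsWithin_iff] at hU
  obtain ⟨ρ, hρ, hballU⟩ := hU
  set t := dist x x₀ with ht
  set s : ℝ := min ρ (min s₀ t) / 2 with hs
  have hspos : 0 < s := by positivity
  have hsρ : s < ρ := by
    have : min ρ (min s₀ t) ≤ ρ := min_le_left _ _
    simp only [hs]; linarith
  have hss₀ : s ≤ s₀ := by
    have : min ρ (min s₀ t) ≤ s₀ := le_trans (min_le_right _ _) (min_le_left _ _)
    simp only [hs]; linarith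
  have hst : s < t := by
    have : min ρ (min s₀ t) ≤ t := le_trans (min_le_right _ _) (min_le_right _ _)
    simp only [hs]; linarith
  set ε : ℝ := min (s / 2) (δ * s / (K + 1)) with hε
  have hεpos : 0 < ε := by positivity
  have hεs : ε < s := lt_of_le_of_lt (min_le_left _ _) (by linarith)
  obtain ⟨ξ, hlip, hξ0, T, hT0, hTle, hξT⟩ := hlen x x₀ ε hεpos
  set y := ξ s with hy
  have hdxy : dist x y ≤ s := by
    have := hlip.dist_le_mul 0 s
    rw [hξ0] at this
    simpa [Real.dist_eq, abs_of_nonneg hspos.le] using this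
  have hTt : t ≤ T := by
    have := hlip.dist_le_mul 0 T
    rw [hξ0, hξT] at this
    simpa [Real.dist_eq, abs_of_nonneg hT0, ht] using this
  have hdx₀y : dist x₀ y ≤ t + ε - s := by
    have h1 := hlip.dist_le_mul T s
    rw [hξT] at h1
    have : dist x₀ y ≤ T - s := by
      have : |T - s| = T - s := abs_of_nonneg (by linarith)
      simpa [Real.dist_eq, this] using h1
    linarith
  have hlow₀ : t - s ≤ dist x₀ y := by
    have h2 := dist_triangle x₀ y x
    have h3 : dist y x ≤ s := by rwa [dist_comm]
    have h4 : t ≤ dist x₀ y + s := by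
      calc t = dist x₀ x := by rw [ht, dist_comm]
        _ ≤ dist x₀ y + dist y x := h2
        _ ≤ dist x₀ y + s := by linarith
    linarith
  have hupp : dist x₀ y ≤ t := by linarith
  have hvlb : K * (s - ε) ≤ v x - v y := by
    have := hlow y (by linarith) hupp
    have h5 : s - ε ≤ t - dist x₀ y := by linarith
    calc K * (s - ε) ≤ K * (t - dist x₀ y) := by nlinarith
      _ ≤ v x - v y := this
  have hdxy_pos : s - ε ≤ dist x y := by
    have h6 : dist x x₀ ≤ dist x y + dist x₀ y := by
      rw [dist_comm x₀ y]; exact dist_triangle x y x₀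
    linarith
  have hd0 : 0 < dist x y := lt_of_lt_of_le (by linarith) hdxy_pos
  have hyx : y ≠ x := fun h => by rw [h, dist_self] at hd0; exact lt_irrefl _ hd0
  refine ⟨y, hballU ⟨Metric.mem_ball.2 (by rw [dist_comm]; linarith), hyx⟩, ?_⟩
  have hnum : 0 ≤ v x - v y := le_trans (by nlinarith) hvlb
  have hmax : max (v x - v y) 0 = v x - v y := max_eq_left hnum
  rw [hmax]
  have step1 : K * (s - ε) / s ≤ (v x - v y) / dist x y :=
    div_le_div₀ hnum hvlb hd0 hdxy
  have hεbound : K * ε ≤ δ * s := by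
    have h7 : ε ≤ δ * s / (K + 1) := min_le_right _ _
    have h8 : K * ε ≤ K * (δ * s / (K + 1)) := by nlinarith
    have h9 : K * (δ * s / (K + 1)) ≤ δ * s := by
      rw [mul_div_assoc'] at *
      rw [div_le_iff₀ (by linarith)]
      nlinarith [mul_nonneg (mul_nonneg hδ.le hspos.le) hK]
    linarith
  have step2 : K - δ ≤ K * (s - ε) / s := by
    rw [le_div_iff₀ hspos]
    nlinarith
  linarith [step1, step2]

/-- in a length space, the cone-like barrier
`v(x) = c + M_r·d(x₀,x) + M·max{d(x₀,x) − r, 0}` satisfies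
`|∇⁻v|(x) ≥ M_r` for `0 < d(x,x₀) ≤ r` and `|∇⁻v|(x) ≥ M` for
`r < d(x,x₀) < 2r`. -/
theorem cone_barrier_subslope {X : Type*} [MetricSpace X]
    (hlen : ∀ x y : X, ∀ ε > (0 : ℝ), ∃ ξ : ℝ → X, LipschitzWith 1 ξ ∧ ξ 0 = x ∧
      ∃ T : ℝ, 0 ≤ T ∧ T ≤ dist x y + ε ∧ ξ T = y)
    (x₀ : X) (r : ℝ) (hr : 0 < r) (Mr M c : ℝ) (hMr : 0 ≤ Mr) (hM : Mr < M) :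
    ∀ x : X, x ≠ x₀ → dist x x₀ < 2 * r →
      (dist x x₀ ≤ r → Mr ≤ subSlope (fun z => c + (Mr * dist x₀ z + M * max (dist x₀ z - r) 0)) x) ∧
      (r < dist x x₀ → M ≤ subSlope (fun z => c + (Mr * dist x₀ z + M * max (dist x₀ z - r) 0)) x) := by
  intro x hx _h2r
  have hxpos : 0 < dist x x₀ := dist_pos.2 hx
  set v : X → ℝ := fun z => c + (Mr * dist x₀ z + M * max (dist x₀ z - r) 0) with hv
  have hM0 : 0 ≤ M := le_trans hMr hM.le
  have hub : ∀ y : X, v x - v y ≤ (Mr + M) * dist x y := by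
    intro y
    have h1 : |dist x₀ x - dist x₀ y| ≤ dist x y := by
      rw [dist_comm x₀ x, dist_comm x₀ y]
      exact abs_dist_sub_le x y x₀
    have h2 : |max (dist x₀ x - r) 0 - max (dist x₀ y - r) 0| ≤ |dist x₀ x - dist x₀ y| := by
      have := abs_max_sub_max_le_abs (dist x₀ x - r) (dist x₀ y - r) 0
      simpa using this
    have h2' : |max (dist x₀ x - r) 0 - max (dist x₀ y - r) 0| ≤ dist x y := le_trans h2 h1
    rw [abs_le] at h1 h2'
    simp only [hv]
    nlinarith [h1.1, h1.2, h2'.1, h2'.2]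
  constructor
  · intro _htr
    refine subslope_ge_aux hlen x₀ x v Mr (Mr + M) (dist x x₀) hMr (by linarith) hxpos hxpos hub ?_
    intro y _hb1 hb2
    rw [dist_comm x x₀] at hb2
    have hmono : max (dist x₀ y - r) 0 ≤ max (dist x₀ x - r) 0 :=
      max_le_max (by linarith) le_rfl
    simp only [hv, dist_comm x₀ x] at *
    nlinarith [hmono]
  · intro htr
    refine subslope_ge_aux hlen x₀ x v M (Mr + M) (dist x x₀ - r) hM0 (by linarith) hxpos
      (by linarith) hub ?_
    intro y hb1 hb2
    rw [dist_comm x x₀] at hb1 hb2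
    have ha : max (dist x₀ x - r) 0 = dist x₀ x - r := by
      rw [dist_comm]; exact max_eq_left (by linarith)
    have hbr : r ≤ dist x₀ y := by rw [dist_comm x₀ x] at hb1; linarith
    have hbmax : max (dist x₀ y - r) 0 = dist x₀ y - r := max_eq_left (by linarith)
    simp only [hv, dist_comm x₀ x] at *
    nlinarith
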